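/- arXiv:1308.6624 — 2 statements merged into one kernel-verified Lean document; each statement's English description precedes it below -/
import Mathlib

section
/- Let k be a field of characteristic zero, J an ideal of k[x_1,…,x_n] contained in (x_1,…,x_n) such that A = k[x_1,…,x_n]/J is Artinian with socle degree η, and suppose the bilinear form (a,b) ↦ ρ(ab) on A is non-degenerate, where ρ : A → k is a linear form whose kernel is complementary to Soc(A). Define R(x_1,…,x_n) = Σ_{j=0}^{η} (1/j!) ρ((x_1 e_1 + ⋯ + x_n e_n)^j), where e_i is the class of x_i in A. Then Ann(R) = J, i.e. a polynomial f ∈ k[x_1,…,x_n] satisfies f(∂/∂x_1,…,∂/∂x_n)(R) = 0 if and only if f ∈ J. -/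
open MvPolynomial

set_option synthInstance.maxHeartbeats 400000
set_option maxHeartbeats 1000000

/-- The iterated partial derivative operator `∂^d = ∏ᵢ (∂/∂xᵢ)^{dᵢ}` attached to a
multi-index `d`. -/
noncomputable def diffMonomial {n : ℕ} {k : Type*} [CommSemiring k] (d : Fin n →₀ ℕ) :
    Module.End k (MvPolynomial (Fin n) k) :=
  (List.ofFn fun i : Fin n =>
    ((pderiv i).toLinearMap : Module.End k (MvPolynomial (Fin n) k)) ^ (d i)).prod

/-- The action of a polynomial `f` on a polynomial `g` by substituting partial
differentiation operators for the variables: `f(∂/∂x_1, …, ∂/∂x_n)(g)`. -/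
noncomputable def diffOp {n : ℕ} {k : Type*} [CommSemiring k]
    (f g : MvPolynomial (Fin n) k) : MvPolynomial (Fin n) k :=
  ∑ d ∈ f.support, f.coeff d • diffMonomial d g

/-- Apply a linear functional `ρ : A → k` coefficientwise to a polynomial with
coefficients in `A`, producing a polynomial with coefficients in `k`. -/
noncomputable def coeffMap {n : ℕ} {k A : Type*} [CommSemiring k] [CommSemiring A]
    (ρ : A → k) (p : MvPolynomial (Fin n) A) : MvPolynomial (Fin n) k :=
  ∑ d ∈ p.support, monomial d (ρ (p.coeff d))

/-- The socle `Soc(A) = { x ∈ M : x M = 0 }` of an algebra `A` with respect to an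
ideal `M` (to be taken as the maximal ideal), as a `k`-submodule of `A`. -/
noncomputable def socle (k : Type*) {A : Type*} [Field k] [CommRing A] [Algebra k A]
    (M : Ideal A) : Submodule k A :=
  (Submodule.restrictScalars k M) ⊓ ⨅ y ∈ M, LinearMap.ker (LinearMap.mulLeft k y)

/-! With `e i` the class of `x i` and `L = ∑ e i x i`, the truncated exponential
`S = ∑_{j ≤ η} L^j / j!` in `A[x]` satisfies `∂ᵢ S = e i S`, because `e i L^η` has its
coefficients in `m^(η+1) = 0`. Applying `ρ` coefficientwise commutes with the `∂ᵢ`, so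
`f(∂) R` is `ρ` applied coefficientwise to `f̄ S`, `f̄` the class of `f`. The coefficients of `S`
span `A`: the constant one is `1`, and `e i` sends the coefficient at `m` to a multiple of the one
at `m + single i 1`. Hence `f(∂) R = 0` says that `ρ (f̄ b) = 0` for all `b`, i.e. `f̄ = 0`. -/

open Function

section DiffMonomial

variable {n : ℕ} {k : Type*} [CommSemiring k]

theorem semiconj_diffMonomial {R P : Type*} [Semiring R] [AddCommMonoid P] [Module R P]
    (φ : P → MvPolynomial (Fin n) k) (D : Fin n → Module.End R P)
    (h : ∀ i, Semiconj φ (D i) (pderiv i)) (d : Fin n →₀ ℕ) :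
    Semiconj φ (List.ofFn fun i => D i ^ d i).prod (diffMonomial d) := by
  unfold diffMonomial
  rw [List.ofFn_eq_map, List.ofFn_eq_map]
  induction List.finRange n with
  | nil => exact Semiconj.id_right
  | cons i l ih =>
    simp only [List.map_cons, List.prod_cons, Module.End.coe_mul, Module.End.coe_pow]
    exact ((h i).iterate_right (d i)).comp_right ih

theorem diffMonomial_of_pderiv_eq (e : Fin n → k) (S : MvPolynomial (Fin n) k)
    (hS : ∀ i, pderiv i S = C (e i) * S) (d : Fin n →₀ ℕ) :
    diffMonomial d S = C (∏ i, e i ^ d i) * S := by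
  have key := semiconj_diffMonomial (fun a => C a * S) (fun i => Algebra.lmul k k (e i))
    (fun i a => by
      show C (e i * a) * S = pderiv i (C a * S)
      rw [pderiv_C_mul, hS, C_mul]; ring) d 1
  have hprod : (List.ofFn fun i => Algebra.lmul k k (e i) ^ d i).prod
      = Algebra.lmul k k (∏ i, e i ^ d i) := by
    simp_rw [← map_pow]
    rw [← List.prod_ofFn, map_list_prod, List.map_ofFn]
    rfl
  rw [hprod] at key
  simpa using key.symm

variable {A F : Type*} [CommSemiring A] [FunLike F A k]

theorem coeff_coeffMap [ZeroHomClass F A k] (ρ : F) (p : MvPolynomial (Fin n) A)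
    (m : Fin n →₀ ℕ) : coeff m (coeffMap ρ p) = ρ (coeff m p) := by
  classical
  rw [coeffMap, coeff_sum, Finset.sum_eq_single m]
  · simp
  · intro d _ hd
    simp [coeff_monomial, hd]
  · intro hm
    simp [notMem_support_iff.mp hm]

theorem coeffMap_eq_zero_iff [ZeroHomClass F A k] (ρ : F) (p : MvPolynomial (Fin n) A) :
    coeffMap ρ p = 0 ↔ ∀ m, ρ (coeff m p) = 0 := by
  simp only [MvPolynomial.ext_iff, coeff_coeffMap, coeff_zero]

theorem semiconj_coeffMap_pderiv [AddMonoidHomClass F A k] (ρ : F) (i : Fin n) :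
    Semiconj (coeffMap (n := n) ρ) (pderiv i) (pderiv i) := by
  intro p
  ext m
  simp only [coeff_coeffMap, coeff_pderiv, ← Nat.cast_succ, ← nsmul_eq_mul', map_nsmul]

theorem coeffMap_diffMonomial [AddMonoidHomClass F A k] (ρ : F) (d : Fin n →₀ ℕ)
    (p : MvPolynomial (Fin n) A) :
    coeffMap ρ (diffMonomial d p) = diffMonomial d (coeffMap ρ p) :=
  semiconj_diffMonomial (coeffMap ρ) (fun i => (pderiv i).toLinearMap)
    (semiconj_coeffMap_pderiv ρ) d p

end DiffMonomial

section TruncExp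

variable (k : Type*) {B : Type*} [Field k] [CommRing B] [Algebra k B]

noncomputable def truncExp (L : B) (η : ℕ) : B :=
  ∑ j ∈ Finset.range (η + 1), ((j.factorial : k))⁻¹ • L ^ j

theorem inv_factorial_succ_mul_succ [CharZero k] (j : ℕ) :
    ((j + 1 : ℕ) : k) * (((j + 1).factorial : k))⁻¹ = ((j.factorial : k))⁻¹ := by
  rw [Nat.factorial_succ, Nat.cast_mul, mul_inv, ← mul_assoc,
    mul_inv_cancel₀ (Nat.cast_ne_zero.mpr j.succ_ne_zero), one_mul]

theorem derivation_truncExp [CharZero k] (D : Derivation k B B) (L : B) (η : ℕ)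
    (h : D L * L ^ η = 0) : D (truncExp k L η) = D L * truncExp k L η := by
  have hterm : ∀ j, D (((j + 1).factorial : k)⁻¹ • L ^ (j + 1)) =
      D L * ((j.factorial : k)⁻¹ • L ^ j) := by
    intro j
    rw [D.map_smul, D.leibniz_pow, add_tsub_cancel_right, smul_comm, ← Nat.cast_smul_eq_nsmul k,
      smul_smul, inv_factorial_succ_mul_succ, smul_eq_mul, mul_smul_comm, mul_comm (L ^ j)]
  rw [truncExp, map_sum, Finset.sum_range_succ', Finset.mul_sum, Finset.sum_range_succ,
    mul_smul_comm, h, smul_zero, add_zero, pow_zero, D.map_smul, D.map_one_eq_zero, smul_zero,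
    add_zero]
  exact Finset.sum_congr rfl fun j _ => hterm j

theorem constantCoeff_truncExp {σ A : Type*} [CommRing A] [Algebra k A]
    {L : MvPolynomial σ A} (hL : constantCoeff L = 0) (η : ℕ) :
    constantCoeff (truncExp k L η) = 1 := by
  rw [truncExp, map_sum, Finset.sum_range_succ']
  simp [constantCoeff_smul, hL]

end TruncExp

section LinearForm

variable {k σ A : Type*} [Field k] [CharZero k] [CommRing A] [Algebra k A] [Fintype σ]

theorem pderiv_truncExp_linearForm (e : σ → A) (I : Ideal A) (he : ∀ i, e i ∈ I) (η : ℕ)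
    (hI : I ^ (η + 1) = ⊥) (i : σ) :
    pderiv i (truncExp k (∑ j, C (e j) * X j) η) =
      C (e i) * truncExp k (∑ j, C (e j) * X j) η := by
  classical
  set L : MvPolynomial σ A := ∑ j, C (e j) * X j
  have hL : L ∈ Ideal.map C I :=
    Ideal.sum_mem _ fun j _ => Ideal.mul_mem_right _ _ (Ideal.mem_map_of_mem _ (he j))
  have hnil : C (e i) * L ^ η = 0 := by
    have : C (e i) * L ^ η ∈ Ideal.map C I ^ (η + 1) := by
      rw [pow_succ']
      exact Ideal.mul_mem_mul (Ideal.mem_map_of_mem _ (he i)) (Ideal.pow_mem_pow hL η)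
    rwa [← Ideal.map_pow, hI, Ideal.map_bot, Ideal.mem_bot] at this
  have hDL : pderiv i L = C (e i) := by
    simp [L, map_sum, pderiv_X, Pi.single_apply]
  have key := derivation_truncExp k ((pderiv i).restrictScalars k) L η
  rw [Derivation.coe_restrictScalars, hDL] at key
  exact key hnil

end LinearForm

section CoeffMap

variable {k A : Type*} [CommSemiring k] [CommSemiring A] [Algebra k A] {n : ℕ}

theorem coeffMap_C_mul_eq_zero_iff (ρ : A →ₗ[k] k) (S : MvPolynomial (Fin n) A)
    (hS : Submodule.span k (Set.range fun m => coeff m S) = ⊤) (a : A) :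
    coeffMap ρ (C a * S) = 0 ↔ ∀ b, ρ (a * b) = 0 := by
  rw [coeffMap_eq_zero_iff]
  simp only [MvPolynomial.coeff_C_mul]
  refine ⟨fun h b => ?_, fun h m => h _⟩
  have hker : Submodule.span k (Set.range fun m => coeff m S) ≤
      LinearMap.ker (ρ ∘ₗ LinearMap.mulLeft k a) :=
    Submodule.span_le.mpr (Set.range_subset_iff.mpr h)
  rw [hS] at hker
  exact hker Submodule.mem_top

theorem diffOp_coeffMap_of_pderiv_eq (ρ : A →ₗ[k] k) (e : Fin n → A)
    (S : MvPolynomial (Fin n) A) (hS : ∀ i, pderiv i S = C (e i) * S)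
    (f : MvPolynomial (Fin n) k) :
    diffOp f (coeffMap ρ S) = coeffMap ρ (C (aeval e f) * S) := by
  ext m
  simp only [diffOp, ← coeffMap_diffMonomial, diffMonomial_of_pderiv_eq e S hS, coeff_sum,
    coeff_smul, coeff_coeffMap, MvPolynomial.coeff_C_mul, aeval_def, eval₂_eq', Finset.sum_mul,
    map_sum, ← Algebra.smul_def, smul_mul_assoc, map_smul]

theorem span_range_coeff_eq_top {σ : Type*} (e : σ → A)
    (he : Algebra.adjoin k (Set.range e) = ⊤) (S : MvPolynomial σ A)
    (hS : ∀ i, pderiv i S = C (e i) * S) (h0 : constantCoeff S = 1) :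
    Submodule.span k (Set.range fun m => coeff m S) = ⊤ := by
  set V := Submodule.span k (Set.range fun m => coeff m S)
  have hV : ∀ i, V ≤ V.comap (LinearMap.mulLeft k (e i)) := by
    refine fun i => Submodule.span_le.mpr (Set.range_subset_iff.mpr fun m => ?_)
    have : e i * coeff m S = (m i + 1) • coeff (m + Finsupp.single i 1) S := by
      rw [← MvPolynomial.coeff_C_mul, ← hS, coeff_pderiv, nsmul_eq_mul', Nat.cast_succ]
    change e i * coeff m S ∈ V
    rw [this]
    exact Submodule.smul_of_tower_mem _ _ (Submodule.subset_span ⟨_, rfl⟩)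
  have hmul : ∀ a ∈ Algebra.adjoin k (Set.range e), ∀ v ∈ V, a * v ∈ V := by
    intro a ha
    induction ha using Algebra.adjoin_induction with
    | mem x hx => obtain ⟨i, rfl⟩ := hx; exact fun v hv => hV i hv
    | algebraMap r => exact fun v hv => by rw [← Algebra.smul_def]; exact V.smul_mem r hv
    | add x y _ _ hx hy => exact fun v hv => by rw [add_mul]; exact V.add_mem (hx v hv) (hy v hv)
    | mul x y _ _ hx hy => exact fun v hv => by rw [mul_assoc]; exact hx _ (hy v hv)
  have h1 : (1 : A) ∈ V := h0 ▸ Submodule.subset_span ⟨0, rfl⟩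
  refine eq_top_iff.mpr fun a _ => ?_
  simpa using hmul a (he ▸ Algebra.mem_top) 1 h1

end CoeffMap

section Quotient

variable {σ k : Type*} [CommRing k] (J : Ideal (MvPolynomial σ k))

theorem aeval_mk_X : aeval (fun i => Ideal.Quotient.mk J (X i)) = Ideal.Quotient.mkₐ k J :=
  algHom_ext fun i => by rw [aeval_X, Ideal.Quotient.mkₐ_eq_mk]

theorem adjoin_range_mk_X :
    Algebra.adjoin k (Set.range fun i => Ideal.Quotient.mk J (X i)) = ⊤ := by
  rw [Algebra.adjoin_range_eq_range_aeval, aeval_mk_X, AlgHom.range_eq_top]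
  exact Ideal.Quotient.mkₐ_surjective k J

end Quotient

theorem ann_of_inverse_system_general
    {k : Type*} [Field k] [CharZero k] (n : ℕ)
    (J : Ideal (MvPolynomial (Fin n) k))
    (η : ℕ)
    (hη₂ : (Ideal.map (Ideal.Quotient.mk J) (Ideal.span (Set.range X))) ^ (η + 1) = ⊥)
    (ρ : (MvPolynomial (Fin n) k ⧸ J) →ₗ[k] k)
    (hnd : ∀ a : MvPolynomial (Fin n) k ⧸ J, (∀ b, ρ (a * b) = 0) → a = 0)
    (f : MvPolynomial (Fin n) k) :
    diffOp f (∑ j ∈ Finset.range (η + 1), ((j.factorial : k))⁻¹ •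
        coeffMap (fun a => ρ a)
          ((∑ i, MvPolynomial.C (Ideal.Quotient.mk J (X i)) * X i) ^ j))
      = 0 ↔ f ∈ J := by
  set e : Fin n → MvPolynomial (Fin n) k ⧸ J := fun i => Ideal.Quotient.mk J (X i)
  set S := truncExp k (∑ i, C (e i) * X i) η
  have hS : ∀ i, pderiv i S = C (e i) * S :=
    pderiv_truncExp_linearForm e _
      (fun i => Ideal.mem_map_of_mem _ (Ideal.subset_span (Set.mem_range_self i))) η hη₂
  have hspan := span_range_coeff_eq_top e (adjoin_range_mk_X J) S hS
    (constantCoeff_truncExp k (by simp) η)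
  have hR : ∑ j ∈ Finset.range (η + 1), ((j.factorial : k))⁻¹ •
      coeffMap (fun a => ρ a) ((∑ i, C (e i) * X i) ^ j) = coeffMap ρ S := by
    ext m
    simp [S, truncExp, coeff_sum, coeff_smul, coeff_coeffMap, map_sum, map_smul]
  rw [hR, diffOp_coeffMap_of_pderiv_eq ρ e S hS, aeval_mk_X, Ideal.Quotient.mkₐ_eq_mk,
    coeffMap_C_mul_eq_zero_iff ρ S hspan, ← Ideal.Quotient.eq_zero_iff_mem]
  exact ⟨hnd _, fun h b => by rw [h, zero_mul, map_zero]⟩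

/-- Let `k` be a field of characteristic zero, `J ⊆ (x_1,…,x_n)` an ideal
with `A = k[x]/J` Artinian of socle degree `η`, and `ρ : A → k` a linear form whose kernel
is complementary to `Soc(A)` such that the bilinear form `(a,b) ↦ ρ(ab)` is non-degenerate.
Then the polynomial `R = Σ_{j=0}^{η} (1/j!) ρ((x_1 e_1 + ⋯ + x_n e_n)^j)` is a Macaulay
inverse system for `A`: a polynomial `f` satisfies `f(∂)(R) = 0` iff `f ∈ J`. -/
theorem ann_of_inverse_system
    {k : Type*} [Field k] [CharZero k] (n : ℕ)
    (J : Ideal (MvPolynomial (Fin n) k))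
    (hJ : J ≤ Ideal.span (Set.range X))
    (hArtinian : FiniteDimensional k (MvPolynomial (Fin n) k ⧸ J))
    (η : ℕ)
    (hη₁ : (Ideal.map (Ideal.Quotient.mk J) (Ideal.span (Set.range X))) ^ η ≠ ⊥)
    (hη₂ : (Ideal.map (Ideal.Quotient.mk J) (Ideal.span (Set.range X))) ^ (η + 1) = ⊥)
    (ρ : (MvPolynomial (Fin n) k ⧸ J) →ₗ[k] k)
    (hker : IsCompl (LinearMap.ker ρ)
      (socle k (Ideal.map (Ideal.Quotient.mk J) (Ideal.span (Set.range X)))))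
    (hnd : ∀ a : MvPolynomial (Fin n) k ⧸ J, (∀ b, ρ (a * b) = 0) → a = 0)
    (f : MvPolynomial (Fin n) k) :
    diffOp f (∑ j ∈ Finset.range (η + 1), ((j.factorial : k))⁻¹ •
        coeffMap (fun a => ρ a)
          ((∑ i, MvPolynomial.C (Ideal.Quotient.mk J (X i)) * X i) ^ j))
      = 0 ↔ f ∈ J :=
  ann_of_inverse_system_general n J η hη₂ ρ hnd f
end

section
/- A binary form R of even degree 2N over ℂ has vanishing catalecticant Cat(R) = 0 if and only if its partial derivatives of order N are linearly dependent in the space of binary forms of degree N. -/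
open MvPolynomial

set_option synthInstance.maxHeartbeats 400000
set_option maxHeartbeats 1000000

/-- The catalecticant of a binary form of even degree `2N`:
writing `R = Σ_j C(2N,j) a_j z₁^{2N-j} z₂^j`, it is the determinant of the Hankel
matrix `(a_{i+j})_{0 ≤ i,j ≤ N}`. -/
noncomputable def catalecticant (N : ℕ) (R : MvPolynomial (Fin 2) ℂ) : ℂ :=
  (Matrix.of fun i j : Fin (N + 1) =>
    R.coeff (Finsupp.single 0 (2 * N - (i.1 + j.1)) + Finsupp.single 1 (i.1 + j.1)) /
      (Nat.choose (2 * N) (i.1 + j.1) : ℂ)).det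

/-!
The `k`-th derivative `∂^N R / ∂z₁^(N-k) ∂z₂^k` is a binary form of degree `N` whose coefficient
of `z₁^(N-i) z₂^i` is `(2N)! / ((N-i)! i!) · a_{i+k}`. A binary form of degree `N` is determined by
these `N + 1` coefficients, so the derivatives are linearly independent exactly when the Hankel
matrix `(a_{i+k})` with its rows rescaled by nonzero constants is invertible.
-/

open scoped Nat

theorem Nat.choose_mul_factorial_mul_ascFactorial_mul_factorial_mul_ascFactorial
    (a b c d : ℕ) :
    (a + c + (b + d)).choose (b + d) * (a ! * (a + 1).ascFactorial c) *
      (b ! * (b + 1).ascFactorial d) = (a + c + (b + d))! := by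
  rw [Nat.factorial_mul_ascFactorial, Nat.factorial_mul_ascFactorial,
    Nat.add_choose_mul_factorial_mul_factorial]

namespace MvPolynomial

section PDerivPow

variable {σ S : Type*} [CommSemiring S]

theorem coeff_pderiv_pow (i : σ) (n : ℕ) (p : MvPolynomial σ S) (m : σ →₀ ℕ) :
    coeff m ((((pderiv i).toLinearMap : Module.End S (MvPolynomial σ S)) ^ n) p) =
      coeff (m + Finsupp.single i n) p * (m i + 1).ascFactorial n := by
  induction n generalizing p with
  | zero => simp
  | succ n ih =>
    rw [pow_succ, Module.End.mul_apply, ih, Derivation.coeFn_coe, coeff_pderiv, add_assoc,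
      ← Finsupp.single_add, Finsupp.add_apply, Finsupp.single_eq_same, Nat.ascFactorial_succ]
    push_cast
    ring

theorem IsHomogeneous.pderiv_pow {p : MvPolynomial σ S} {d : ℕ} (h : p.IsHomogeneous d)
    (i : σ) (n : ℕ) :
    ((((pderiv i).toLinearMap : Module.End S (MvPolynomial σ S)) ^ n) p).IsHomogeneous
      (d - n) := by
  induction n with
  | zero => simpa
  | succ n ih =>
    rw [pow_succ', Module.End.mul_apply, Nat.sub_add_eq]
    exact ih.pderiv

end PDerivPow

section BinaryForms

/-- The exponent of the monomial `z₁^(N-i) z₂^i`. -/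
noncomputable def binaryExponent (N i : ℕ) : Fin 2 →₀ ℕ :=
  Finsupp.single 0 (N - i) + Finsupp.single 1 i

@[simp]
theorem binaryExponent_apply_zero (N i : ℕ) : binaryExponent N i 0 = N - i := by
  simp [binaryExponent]

@[simp]
theorem binaryExponent_apply_one (N i : ℕ) : binaryExponent N i 1 = i := by
  simp [binaryExponent]

theorem eq_binaryExponent_of_degree_eq {N : ℕ} {m : Fin 2 →₀ ℕ} (hm : m.degree = N) :
    m = binaryExponent N (m 1) := by
  rw [Finsupp.degree_eq_sum, Fin.sum_univ_two] at hm
  ext a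
  fin_cases a <;> simp [binaryExponent]; omega

variable {S : Type*} [CommRing S]

theorem IsHomogeneous.eq_zero_of_coeff_binaryExponent {N : ℕ} {p : MvPolynomial (Fin 2) S}
    (hp : p.IsHomogeneous N) (h : ∀ i ≤ N, coeff (binaryExponent N i) p = 0) : p = 0 := by
  ext m
  by_cases hm : m.degree = N
  · have hm1 : m 1 ≤ N := by
      rw [← hm, Finsupp.degree_eq_sum, Fin.sum_univ_two]
      omega
    rw [eq_binaryExponent_of_degree_eq hm, coeff_zero]
    exact h _ hm1
  · exact hp.coeff_eq_zero hm

variable (S) in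
noncomputable def binaryCoeffs (N : ℕ) : MvPolynomial (Fin 2) S →ₗ[S] Fin (N + 1) → S :=
  LinearMap.pi fun i => lcoeff S (binaryExponent N i)

theorem injOn_binaryCoeffs (N : ℕ) :
    Set.InjOn (binaryCoeffs S N) (homogeneousSubmodule (Fin 2) S N) := by
  intro p hp q hq hpq
  rw [← sub_eq_zero]
  refine ((homogeneousSubmodule (Fin 2) S N).sub_mem hp hq).eq_zero_of_coeff_binaryExponent
    fun i hi => ?_
  have := congrFun hpq ⟨i, Nat.lt_succ_of_le hi⟩
  simpa [binaryCoeffs, sub_eq_zero] using this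

end BinaryForms

section Catalecticant

variable {K : Type*} [Field K]

/-- The order-`N` partial derivatives `∂^N R / ∂z₁^(N-k) ∂z₂^k`, `k = 0, …, N`. -/
noncomputable def binaryPDerivs (N : ℕ) (R : MvPolynomial (Fin 2) K) :
    Fin (N + 1) → MvPolynomial (Fin 2) K := fun k =>
  (((pderiv (0 : Fin 2)).toLinearMap : Module.End K (MvPolynomial (Fin 2) K)) ^ (N - k.1))
    ((((pderiv (1 : Fin 2)).toLinearMap : Module.End K (MvPolynomial (Fin 2) K)) ^ k.1) R)

noncomputable def catalecticantMatrix (N : ℕ) (R : MvPolynomial (Fin 2) K) :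
    Matrix (Fin (N + 1)) (Fin (N + 1)) K :=
  Matrix.of fun i j =>
    coeff (binaryExponent (2 * N) (i + j)) R / (Nat.choose (2 * N) (i + j) : K)

theorem IsHomogeneous.binaryPDerivs {N : ℕ} {R : MvPolynomial (Fin 2) K}
    (hR : R.IsHomogeneous (2 * N)) (k : Fin (N + 1)) :
    (binaryPDerivs N R k).IsHomogeneous N := by
  have := (hR.pderiv_pow 1 k).pderiv_pow 0 (N - k)
  rwa [show 2 * N - k - (N - k) = N by omega] at this

variable [CharZero K]

theorem coeff_binaryExponent_binaryPDerivs (N : ℕ) (R : MvPolynomial (Fin 2) K)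
    (i k : Fin (N + 1)) :
    coeff (binaryExponent N i) (binaryPDerivs N R k) =
      ((2 * N)! / ((N - i)! * i !) : K) * catalecticantMatrix N R i k := by
  have hi := i.is_le
  have hk := k.is_le
  have hexp : binaryExponent N i + Finsupp.single (0 : Fin 2) (N - (k : ℕ)) +
      Finsupp.single 1 (k : ℕ) = binaryExponent (2 * N) (i + k) := by
    ext a
    fin_cases a <;> simp [binaryExponent]; omega
  have hfact := Nat.choose_mul_factorial_mul_ascFactorial_mul_factorial_mul_ascFactorial
    (N - i) i (N - k) k
  rw [show N - i + (N - k) + (i + k) = 2 * N by omega] at hfact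
  simp only [binaryPDerivs, catalecticantMatrix, Matrix.of_apply, coeff_pderiv_pow, hexp,
    Finsupp.add_apply, binaryExponent_apply_zero, binaryExponent_apply_one,
    Finsupp.single_apply, Fin.zero_ne_one, if_false, add_zero]
  have hchoose : ((2 * N).choose (i + k) : K) ≠ 0 :=
    Nat.cast_ne_zero.2 (Nat.choose_pos (by omega)).ne'
  have hfactorials : ((N - i)! * i ! : K) ≠ 0 := by
    norm_cast
    positivity
  rw [mul_div_assoc', eq_div_iff hchoose, div_mul_eq_mul_div, eq_div_iff hfactorials, ← hfact]
  push_cast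
  ring

theorem linearIndependent_binaryPDerivs_iff {N : ℕ} {R : MvPolynomial (Fin 2) K}
    (hR : R.IsHomogeneous (2 * N)) :
    LinearIndependent K (binaryPDerivs N R) ↔ (catalecticantMatrix N R).det ≠ 0 := by
  have hspan : Submodule.span K (Set.range (binaryPDerivs N R)) ≤
      homogeneousSubmodule (Fin 2) K N :=
    Submodule.span_le.2 (Set.range_subset_iff.2 hR.binaryPDerivs)
  rw [← (binaryCoeffs K N).linearIndependent_iff_of_injOn ((injOn_binaryCoeffs N).mono hspan)]
  have hcols : binaryCoeffs K N ∘ binaryPDerivs N R = (Matrix.of fun i k : Fin (N + 1) =>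
      ((2 * N)! / ((N - i)! * i !) : K) * catalecticantMatrix N R i k).col := by
    ext k i
    exact coeff_binaryExponent_binaryPDerivs N R i k
  rw [hcols, Matrix.linearIndependent_cols_iff_isUnit, Matrix.isUnit_iff_isUnit_det,
    isUnit_iff_ne_zero, Matrix.det_mul_column, mul_ne_zero_iff, and_iff_right]
  refine Finset.prod_ne_zero_iff.2 fun i _ => div_ne_zero ?_ ?_ <;> norm_cast <;> positivity

end Catalecticant

end MvPolynomial

/-- A binary form `R` of even degree `2N` over `ℂ` has vanishing
catalecticant if and only if its partial derivatives of order `N`,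
`∂^N R/(∂z₁^{N-k} ∂z₂^k)` for `k = 0, …, N`, are linearly dependent. -/
theorem catalecticant_eq_zero_iff
    (N : ℕ) (R : MvPolynomial (Fin 2) ℂ) (hR : R.IsHomogeneous (2 * N)) :
    catalecticant N R = 0 ↔
      ¬ LinearIndependent ℂ (fun k : Fin (N + 1) =>
        (((pderiv (0 : Fin 2)).toLinearMap : Module.End ℂ (MvPolynomial (Fin 2) ℂ))
            ^ (N - k.1))
          ((((pderiv (1 : Fin 2)).toLinearMap :
              Module.End ℂ (MvPolynomial (Fin 2) ℂ)) ^ k.1) R)) := by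
  have hcat : catalecticant N R = (catalecticantMatrix N R).det := rfl
  rw [hcat, ← not_ne_iff]
  exact not_congr (linearIndependent_binaryPDerivs_iff hR).symm
end
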